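/- For all ε, δ, γ ∈ ℝ and j ∈ {1,2}, on the open subset of ℳ³𝒯 where 1 − εδγ·𝐛_k·𝐚_k ≠ 0 and 1 − εδγ·𝐛_k·𝐚_{k−1} ≠ 0 for all k, the pull-back of the flow M²TL(ε,δ) under the Miura map M_j(ε,δ;γ) coincides with the triple modified Toda lattice M³TL(ε,δ,γ): DM_j(ε,δ;γ)(𝐚,𝐛)·F_{M³TL(ε,δ,γ)}(𝐚,𝐛) = F_{M²TL(ε,δ)}(M_j(ε,δ;γ)(𝐚,𝐛)) at every point of this domain. -/

import Mathlib

open scoped BigOperators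

/-- Index set for the periodic phase space `ℝ^{2N}`: `Sum.inl k` indexes the first
family of coordinates and `Sum.inr k` the second family, `k ∈ ℤ/Nℤ`. -/
abbrev Idx (N : ℕ) : Type := (ZMod N) ⊕ (ZMod N)

/-- The phase space `ℝ^{2N}`. -/
abbrev Phase (N : ℕ) : Type := Idx N → ℝ

/-- First family of coordinates. -/
def c1 {N : ℕ} (x : Phase N) (k : ZMod N) : ℝ := x (Sum.inl k)

/-- Second family of coordinates. -/
def c2 {N : ℕ} (x : Phase N) (k : ZMod N) : ℝ := x (Sum.inr k)

/-- A structure matrix on `Phase N`. -/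
abbrev SM (N : ℕ) : Type := Phase N → Idx N → Idx N → ℝ

/-- Partial derivative of `F` at `x` in the `i`-th coordinate direction. -/
noncomputable def pderiv {N : ℕ} [NeZero N] (i : Idx N) (F : Phase N → ℝ)
    (x : Phase N) : ℝ :=
  fderiv ℝ F x (Pi.single i 1)

/-- The bracket of two functions associated with a structure matrix `J`:
`{F,G}(x) = ∑_{i,j} ∂_i F(x) · J_{ij}(x) · ∂_j G(x)`. -/
noncomputable def bracket {N : ℕ} [NeZero N] (J : SM N) (F G : Phase N → ℝ)
    (x : Phase N) : ℝ :=
  ∑ i : Idx N, ∑ j : Idx N, pderiv i F x * J x i j * pderiv j G x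

/-- The Jacobi identity for `J` holds at every point satisfying `P`. -/
def JacobiOn {N : ℕ} [NeZero N] (J : SM N) (P : Phase N → Prop) : Prop :=
  ∀ F G H : Phase N → ℝ, ContDiff ℝ (⊤ : ℕ∞) F → ContDiff ℝ (⊤ : ℕ∞) G →
    ContDiff ℝ (⊤ : ℕ∞) H → ∀ x : Phase N, P x →
      bracket J (bracket J F G) H x + bracket J (bracket J G H) F x +
        bracket J (bracket J H F) G x = 0

/-- `J` defines a Poisson bracket: the Jacobi identity holds everywhere. -/
def IsPoisson {N : ℕ} [NeZero N] (J : SM N) : Prop :=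
  JacobiOn J fun _ => True

/-- `f(x) = J(x)∇H(x)`: the vector field `f` is Hamiltonian at `x` with respect
to the structure matrix `J`, with Hamilton function `H`. -/
def HamAt {N : ℕ} [NeZero N] (J : SM N) (f : Phase N → Phase N)
    (H : Phase N → ℝ) (x : Phase N) : Prop :=
  ∀ i : Idx N, f x i = ∑ j : Idx N, J x i j * pderiv j H x

/-- `Dφ(x)·J(x)·Dφ(x)ᵀ = J'(φ(x))`: `φ` is a Poisson map at `x` from the
structure matrix `J` to the structure matrix `J'`. -/
def PoissonMapAt {N : ℕ} [NeZero N] (φ : Phase N → Phase N) (J J' : SM N)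
    (x : Phase N) : Prop :=
  ∀ i j : Idx N,
    (∑ k : Idx N, ∑ l : Idx N,
      pderiv k (fun y => φ y i) x * J x k l * pderiv l (fun y => φ y j) x)
      = J' (φ x) i j

/-- `Dφ(x)·f(x) = g(φ(x))`: the vector field `f` is the pull-back of the vector
field `g` under `φ`, at the point `x`. -/
def PullbackAt {N : ℕ} [NeZero N] (φ : Phase N → Phase N)
    (f g : Phase N → Phase N) (x : Phase N) : Prop :=
  ∀ i : Idx N, (∑ k : Idx N, pderiv k (fun y => φ y i) x * f x k) = g (φ x) i

/-- The double modified Toda lattice vector field `M²TL(ε,δ)`: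
`ṙ_k = (1+εr_k)(1+δr_k)(s_k - s_{k-1})`, `ṡ_k = s_k(1+εδs_k)(r_{k+1} - r_k)`,
with coordinates `r_k = c1 x k`, `s_k = c2 x k`. -/
noncomputable def m2tlF (ε δ : ℝ) {N : ℕ} (x : Phase N) : Phase N := fun i =>
  match i with
  | Sum.inl k => (1 + ε * c1 x k) * (1 + δ * c1 x k) * (c2 x k - c2 x (k - 1))
  | Sum.inr k => c2 x k * (1 + ε * δ * c2 x k) * (c1 x (k + 1) - c1 x k)

/-- The triple modified Toda lattice vector field `M³TL(ε,δ,γ)`, with coordinates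
`𝐛_k = c1 x k`, `𝐚_k = c2 x k`. -/
noncomputable def m3tlF (ε δ γ : ℝ) {N : ℕ} (x : Phase N) : Phase N := fun i =>
  match i with
  | Sum.inl k =>
      (1 + ε * c1 x k) * (1 + δ * c1 x k) * (1 + γ * c1 x k) *
        (c2 x k / (1 - ε * δ * γ * c1 x k * c2 x k)
          - c2 x (k - 1) / (1 - ε * δ * γ * c1 x k * c2 x (k - 1)))
  | Sum.inr k =>
      c2 x k * (1 + ε * δ * c2 x k) * (1 + ε * γ * c2 x k) * (1 + δ * γ * c2 x k) *
        (c1 x (k + 1) / (1 - ε * δ * γ * c1 x (k + 1) * c2 x k)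
          - c1 x k / (1 - ε * δ * γ * c1 x k * c2 x k))

/-- Miura map `M₁(ε,δ;γ) : ℳ³𝒯 → ℳ²𝒯`. -/
noncomputable def miuraM3T1 (ε δ γ : ℝ) {N : ℕ} (x : Phase N) : Phase N := fun i =>
  match i with
  | Sum.inl k =>
      (c1 x k + γ * c2 x (k - 1) + γ * (ε + δ) * c1 x k * c2 x (k - 1))
        / (1 - ε * δ * γ * c1 x k * c2 x (k - 1))
  | Sum.inr k =>
      c2 x k * (1 + γ * c1 x k) / (1 - ε * δ * γ * c1 x k * c2 x k)

/-- Miura map `M₂(ε,δ;γ) : ℳ³𝒯 → ℳ²𝒯`. -/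
noncomputable def miuraM3T2 (ε δ γ : ℝ) {N : ℕ} (x : Phase N) : Phase N := fun i =>
  match i with
  | Sum.inl k =>
      (c1 x k + γ * c2 x k + γ * (ε + δ) * c1 x k * c2 x k)
        / (1 - ε * δ * γ * c1 x k * c2 x k)
  | Sum.inr k =>
      c2 x k * (1 + γ * c1 x (k + 1)) / (1 - ε * δ * γ * c1 x (k + 1) * c2 x k)

/-!
Each component of either Miura map is a bilinear fraction `(B p + C q + D p q) / (1 - E p q)` of
two coordinates `p, q`, so its differential along `v` is an explicit combination of `v` at those
two coordinates. The pull-back condition then reduces, component by component, to a rational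
identity in at most four coordinates whose only denominators are three factors
`1 - εδγ 𝐛_i 𝐚_j`, nonzero on the domain; clearing them leaves a polynomial identity.
-/

noncomputable def bilinearFraction (B C D E p q : ℝ) : ℝ :=
  (B * p + C * q + D * p * q) / (1 - E * p * q)

theorem fderiv_bilinearFraction_apply {ι : Type*} [Fintype ι] (i j : ι) (B C D E : ℝ)
    {x : ι → ℝ} (hx : 1 - E * x i * x j ≠ 0) (v : ι → ℝ) :
    fderiv ℝ (fun y : ι → ℝ => bilinearFraction B C D E (y i) (y j)) x v
      = ((B + D * x j + C * E * x j ^ 2) * v i + (C + D * x i + B * E * x i ^ 2) * v j)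
          / (1 - E * x i * x j) ^ 2 := by
  have hi := hasFDerivAt_apply (𝕜 := ℝ) i x
  have hj := hasFDerivAt_apply (𝕜 := ℝ) j x
  have hnum := ((hi.const_mul B).add (hj.const_mul C)).add ((hi.const_mul D).mul hj)
  have hden := ((hi.const_mul E).mul hj).const_sub 1
  have hquot := hnum.mul ((hasDerivAt_inv hx).comp_hasFDerivAt x hden)
  have hF : HasFDerivAt (fun y : ι → ℝ => bilinearFraction B C D E (y i) (y j)) _ x :=
    hquot.congr_of_eventuallyEq
      (.of_forall fun y => by simp [bilinearFraction, div_eq_mul_inv])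
  rw [hF.fderiv]
  simp only [Pi.add_apply, Pi.mul_apply, Function.comp_apply, add_apply, smul_apply, neg_apply,
    ContinuousLinearMap.proj_apply, smul_eq_mul]
  field_simp
  ring

theorem sum_pderiv_mul_eq_fderiv {N : ℕ} [NeZero N] (F : Phase N → ℝ) (x v : Phase N) :
    ∑ k : Idx N, pderiv k F x * v k = fderiv ℝ F x v := by
  conv_rhs => rw [← Finset.univ_sum_single v, map_sum]
  refine Finset.sum_congr rfl fun k _ => ?_
  rw [pderiv, mul_comm, ← smul_eq_mul, ← map_smul, ← Pi.single_smul', smul_eq_mul, mul_one]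

section Miura

variable {N : ℕ} (ε δ γ : ℝ) (k : ZMod N)

theorem miuraM3T1_inl_eq : (fun y : Phase N => miuraM3T1 ε δ γ y (Sum.inl k)) = fun y =>
    bilinearFraction 1 γ (γ * (ε + δ)) (ε * δ * γ) (y (Sum.inl k)) (y (Sum.inr (k - 1))) := by
  ext y; simp only [miuraM3T1, bilinearFraction, c1, c2]; ring

theorem miuraM3T1_inr_eq : (fun y : Phase N => miuraM3T1 ε δ γ y (Sum.inr k)) = fun y =>
    bilinearFraction 0 1 γ (ε * δ * γ) (y (Sum.inl k)) (y (Sum.inr k)) := by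
  ext y; simp only [miuraM3T1, bilinearFraction, c1, c2]; ring

theorem miuraM3T2_inl_eq : (fun y : Phase N => miuraM3T2 ε δ γ y (Sum.inl k)) = fun y =>
    bilinearFraction 1 γ (γ * (ε + δ)) (ε * δ * γ) (y (Sum.inl k)) (y (Sum.inr k)) := by
  ext y; simp only [miuraM3T2, bilinearFraction, c1, c2]; ring

theorem miuraM3T2_inr_eq : (fun y : Phase N => miuraM3T2 ε δ γ y (Sum.inr k)) = fun y =>
    bilinearFraction 0 1 γ (ε * δ * γ) (y (Sum.inl (k + 1))) (y (Sum.inr k)) := by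
  ext y; simp only [miuraM3T2, bilinearFraction, c1, c2]; ring

variable [NeZero N] {x : Phase N}

theorem pullbackAt_miuraM3T1
    (hx : ∀ k : ZMod N, 1 - ε * δ * γ * c1 x k * c2 x k ≠ 0 ∧
      1 - ε * δ * γ * c1 x k * c2 x (k - 1) ≠ 0) :
    PullbackAt (miuraM3T1 ε δ γ) (m3tlF ε δ γ) (m2tlF ε δ) x := by
  rintro (k | k)
  · rw [sum_pderiv_mul_eq_fderiv, miuraM3T1_inl_eq,
      fderiv_bilinearFraction_apply _ _ _ _ _ _ (hx k).2]
    have h₁ := (hx k).1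
    have h₂ := (hx k).2
    have h₃ := (hx (k - 1)).1
    simp only [m3tlF, m2tlF, miuraM3T1, c1, c2, sub_add_cancel] at h₁ h₂ h₃ ⊢
    -- `field_simp` only finds the nonvanishing denominators among its hypotheses as atoms.
    generalize hd₁ : 1 - ε * δ * γ * x (Sum.inl k) * x (Sum.inr k) = d₁ at *
    generalize hd₂ : 1 - ε * δ * γ * x (Sum.inl k) * x (Sum.inr (k - 1)) = d₂ at *
    generalize hd₃ : 1 - ε * δ * γ * x (Sum.inl (k - 1)) * x (Sum.inr (k - 1)) = d₃ at *
    field_simp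
    subst hd₁ hd₂ hd₃
    ring
  · rw [sum_pderiv_mul_eq_fderiv, miuraM3T1_inr_eq,
      fderiv_bilinearFraction_apply _ _ _ _ _ _ (hx k).1]
    have h₁ := (hx k).1
    have h₂ := (hx k).2
    have h₃ := (hx (k + 1)).2
    simp only [m3tlF, m2tlF, miuraM3T1, c1, c2, add_sub_cancel_right] at h₁ h₂ h₃ ⊢
    generalize hd₁ : 1 - ε * δ * γ * x (Sum.inl k) * x (Sum.inr k) = d₁ at *
    generalize hd₂ : 1 - ε * δ * γ * x (Sum.inl k) * x (Sum.inr (k - 1)) = d₂ at *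
    generalize hd₃ : 1 - ε * δ * γ * x (Sum.inl (k + 1)) * x (Sum.inr k) = d₃ at *
    field_simp
    subst hd₁ hd₂ hd₃
    ring

theorem pullbackAt_miuraM3T2
    (hx : ∀ k : ZMod N, 1 - ε * δ * γ * c1 x k * c2 x k ≠ 0 ∧
      1 - ε * δ * γ * c1 x k * c2 x (k - 1) ≠ 0) :
    PullbackAt (miuraM3T2 ε δ γ) (m3tlF ε δ γ) (m2tlF ε δ) x := by
  rintro (k | k)
  · rw [sum_pderiv_mul_eq_fderiv, miuraM3T2_inl_eq,
      fderiv_bilinearFraction_apply _ _ _ _ _ _ (hx k).1]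
    have h₁ := (hx k).1
    have h₂ := (hx k).2
    have h₃ := (hx (k + 1)).2
    simp only [m3tlF, m2tlF, miuraM3T2, c1, c2, sub_add_cancel, add_sub_cancel_right] at h₁ h₂ h₃ ⊢
    generalize hd₁ : 1 - ε * δ * γ * x (Sum.inl k) * x (Sum.inr k) = d₁ at *
    generalize hd₂ : 1 - ε * δ * γ * x (Sum.inl k) * x (Sum.inr (k - 1)) = d₂ at *
    generalize hd₃ : 1 - ε * δ * γ * x (Sum.inl (k + 1)) * x (Sum.inr k) = d₃ at *
    field_simp
    subst hd₁ hd₂ hd₃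
    ring
  · have h₁ := (hx k).1
    have h₂ := (hx (k + 1)).1
    have h₃ := (hx (k + 1)).2
    rw [add_sub_cancel_right] at h₃
    rw [sum_pderiv_mul_eq_fderiv, miuraM3T2_inr_eq, fderiv_bilinearFraction_apply _ _ _ _ _ _ h₃]
    simp only [m3tlF, m2tlF, miuraM3T2, c1, c2, add_sub_cancel_right] at h₁ h₂ h₃ ⊢
    generalize hd₁ : 1 - ε * δ * γ * x (Sum.inl k) * x (Sum.inr k) = d₁ at *
    generalize hd₂ : 1 - ε * δ * γ * x (Sum.inl (k + 1)) * x (Sum.inr (k + 1)) = d₂ at *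
    generalize hd₃ : 1 - ε * δ * γ * x (Sum.inl (k + 1)) * x (Sum.inr k) = d₃ at *
    field_simp
    subst hd₁ hd₂ hd₃
    ring

end Miura

theorem stmt11_general (N : ℕ) [NeZero N] (ε δ γ : ℝ) :
    ∀ x : Phase N,
      (∀ k : ZMod N, 1 - ε * δ * γ * c1 x k * c2 x k ≠ 0 ∧
        1 - ε * δ * γ * c1 x k * c2 x (k - 1) ≠ 0) →
      PullbackAt (miuraM3T1 ε δ γ) (m3tlF ε δ γ) (m2tlF ε δ) x ∧
      PullbackAt (miuraM3T2 ε δ γ) (m3tlF ε δ γ) (m2tlF ε δ) x :=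
  fun _ hx => ⟨pullbackAt_miuraM3T1 ε δ γ hx, pullbackAt_miuraM3T2 ε δ γ hx⟩

/-- on the open set where `1 - εδγ𝐛_k𝐚_k ≠ 0` and
`1 - εδγ𝐛_k𝐚_{k-1} ≠ 0`, the pull-back of `M²TL(ε,δ)` under either Miura map
`M₁(ε,δ;γ), M₂(ε,δ;γ)` coincides with `M³TL(ε,δ,γ)`. -/
theorem stmt11 (N : ℕ) [NeZero N] (hN : 5 ≤ N) (ε δ γ : ℝ) :
    ∀ x : Phase N,
      (∀ k : ZMod N, 1 - ε * δ * γ * c1 x k * c2 x k ≠ 0 ∧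
        1 - ε * δ * γ * c1 x k * c2 x (k - 1) ≠ 0) →
      PullbackAt (miuraM3T1 ε δ γ) (m3tlF ε δ γ) (m2tlF ε δ) x ∧
      PullbackAt (miuraM3T2 ε δ γ) (m3tlF ε δ γ) (m2tlF ε δ) x :=
  stmt11_general N ε δ γ
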